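/- arXiv:0905.4482 — 2 statements merged into one kernel-verified Lean document; each statement's English description precedes it below -/
import Mathlib

section
/- Let z, w ∈ ℝ^d, let t be a positive integer, and suppose z is t-sparse (it has at most t nonzero coordinates). Let w_t denote a vector consisting of the t largest-magnitude coordinates of w (with all other coordinates set to zero, ties broken arbitrarily). Then ‖z − w_t‖₂ ≤ 3 ‖z − w‖₂. -/
/-- The Euclidean (ℓ2) norm of a finitely-indexed real vector. -/
noncomputable def l2 {ι : Type*} [Fintype ι] (v : ι → ℝ) : ℝ :=
  Real.sqrt (∑ i, (v i) ^ 2)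

/-- A vector is `s`-sparse if it has at most `s` nonzero coordinates. -/
def Sparse {d : ℕ} (s : ℕ) (v : Fin d → ℝ) : Prop :=
  {i | v i ≠ 0}.ncard ≤ s

/-- The restriction of a vector to a set of coordinates (zero elsewhere). -/
def restr {d : ℕ} (S : Finset (Fin d)) (v : Fin d → ℝ) : Fin d → ℝ :=
  fun i => if i ∈ S then v i else 0

/-!
By the triangle inequality `‖z - w_t‖ ≤ ‖z - w‖ + ‖w - w_t‖`, where `‖w - w_t‖²` is the mass of
`w` outside its `t` largest coordinates. That mass is at most the mass of `w` outside the support `T`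
of `z`, because the top `t` coordinates carry at least as much mass as the `≤ t` coordinates of
`T`; and outside `T` the vector `w` agrees with `w - z`. So in fact `‖z - w_t‖ ≤ 2 ‖z - w‖`.
-/

open Finset

namespace Finset

variable {ι M : Type*} [DecidableEq ι] [AddCommMonoid M] [LinearOrder M] [IsOrderedAddMonoid M]

theorem sum_le_sum_of_card_le_of_forall_le {s t : Finset ι} {f : ι → M}
    (hf : ∀ i ∈ s, 0 ≤ f i) (hcard : #t ≤ #s) (hle : ∀ i ∈ s, ∀ j ∉ s, f j ≤ f i) :
    ∑ i ∈ t, f i ≤ ∑ i ∈ s, f i := by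
  have hcard' : #(t \ s) ≤ #(s \ t) := by
    have := card_sdiff_add_card_inter t s
    have := card_sdiff_add_card_inter s t
    have := congrArg card (inter_comm s t)
    omega
  suffices h : ∑ i ∈ t \ s, f i ≤ ∑ i ∈ s \ t, f i by
    rw [← sum_inter_add_sum_sdiff t s, ← sum_inter_add_sum_sdiff s t, inter_comm]
    gcongr
  rcases (s \ t).eq_empty_or_nonempty with hempty | hne
  · rw [hempty, card_empty, Nat.le_zero, card_eq_zero] at hcard'
    simp [hempty, hcard']
  obtain ⟨m, hm, hmin⟩ := exists_min_image (s \ t) f hne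
  calc ∑ i ∈ t \ s, f i ≤ #(t \ s) • f m :=
        sum_le_card_nsmul _ _ _ fun j hj ↦ hle m (mem_sdiff.1 hm).1 j (mem_sdiff.1 hj).2
    _ ≤ #(s \ t) • f m := nsmul_le_nsmul_left (hf m (mem_sdiff.1 hm).1) hcard'
    _ ≤ ∑ i ∈ s \ t, f i := card_nsmul_le_sum _ _ _ hmin

end Finset

lemma l2_eq_norm {ι : Type*} [Fintype ι] (v : ι → ℝ) : l2 v = ‖WithLp.toLp 2 v‖ := by
  simp [l2, EuclideanSpace.norm_eq, Real.norm_eq_abs, sq_abs]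

lemma l2_add_le {ι : Type*} [Fintype ι] (u v : ι → ℝ) : l2 (u + v) ≤ l2 u + l2 v := by
  simpa only [l2_eq_norm, WithLp.toLp_add] using norm_add_le _ _

lemma Sparse.card_support_le {d s : ℕ} {v : Fin d → ℝ} (hv : Sparse s v) :
    #{i | v i ≠ 0} ≤ s := by
  rwa [Sparse, Set.ncard_eq_toFinset_card', Set.toFinset_ofPred] at hv

lemma sum_sq_sub_restr {d : ℕ} (S : Finset (Fin d)) (w : Fin d → ℝ) :
    ∑ i, (w - restr S w) i ^ 2 = ∑ i ∈ Sᶜ, w i ^ 2 := by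
  rw [← sum_add_sum_compl S, sum_eq_zero fun i hi ↦ by simp [restr, hi], zero_add]
  exact sum_congr rfl fun i hi ↦ by simp [restr, mem_compl.1 hi]

lemma sum_sq_compl_le_sum_sq_sub {ι : Type*} [Fintype ι] [DecidableEq ι] {z w : ι → ℝ}
    {S : Finset ι} (hz : #{i | z i ≠ 0} ≤ #S) (hbig : ∀ i ∈ S, ∀ j ∉ S, |w j| ≤ |w i|) :
    ∑ i ∈ Sᶜ, w i ^ 2 ≤ ∑ i, (z i - w i) ^ 2 := by
  set T : Finset ι := {i | z i ≠ 0}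
  have htop : ∑ i ∈ T, w i ^ 2 ≤ ∑ i ∈ S, w i ^ 2 :=
    sum_le_sum_of_card_le_of_forall_le (fun i _ ↦ sq_nonneg _) hz
      fun i hi j hj ↦ sq_le_sq.2 (hbig i hi j hj)
  have hoff : ∑ i ∈ Tᶜ, w i ^ 2 = ∑ i ∈ Tᶜ, (z i - w i) ^ 2 :=
    sum_congr rfl fun i hi ↦ by
      have : z i = 0 := by simpa [T] using hi
      simp [this]
  calc ∑ i ∈ Sᶜ, w i ^ 2 = ∑ i, w i ^ 2 - ∑ i ∈ S, w i ^ 2 := by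
        rw [← sum_add_sum_compl S]; ring
    _ ≤ ∑ i, w i ^ 2 - ∑ i ∈ T, w i ^ 2 := by gcongr
    _ = ∑ i ∈ Tᶜ, (z i - w i) ^ 2 := by rw [← hoff, ← sum_add_sum_compl T]; ring
    _ ≤ ∑ i, (z i - w i) ^ 2 :=
        sum_le_sum_of_subset_of_nonneg (subset_univ _) fun i _ _ ↦ sq_nonneg _

theorem stmt5_general (d t : ℕ) (z w : Fin d → ℝ) (hz : Sparse t z)
    (S : Finset (Fin d)) (hcard : S.card = t)
    (hbig : ∀ i ∈ S, ∀ j ∉ S, |w j| ≤ |w i|) :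
    l2 (z - restr S w) ≤ 3 * l2 (z - w) := by
  have htail : l2 (w - restr S w) ≤ l2 (z - w) := by
    refine Real.sqrt_le_sqrt ?_
    rw [sum_sq_sub_restr]
    exact sum_sq_compl_le_sum_sq_sub (hcard ▸ hz.card_support_le) hbig
  calc l2 (z - restr S w) = l2 ((z - w) + (w - restr S w)) := by rw [sub_add_sub_cancel]
    _ ≤ l2 (z - w) + l2 (w - restr S w) := l2_add_le _ _
    _ ≤ 3 * l2 (z - w) := by linarith [show 0 ≤ l2 (z - w) from Real.sqrt_nonneg _]

/-- If `z` is `t`-sparse and `w_t = restr S w` is a best `t`-sparse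
approximation of `w` (`S` a set of `t` largest-magnitude coordinates of `w`), then
`‖z − w_t‖₂ ≤ 3 ‖z − w‖₂`. -/
theorem stmt5 (d t : ℕ) (ht : 0 < t) (z w : Fin d → ℝ) (hz : Sparse t z)
    (S : Finset (Fin d)) (hcard : S.card = t)
    (hbig : ∀ i ∈ S, ∀ j ∉ S, |w j| ≤ |w i|) :
    l2 (z - restr S w) ≤ 3 * l2 (z - w) :=
  stmt5_general d t z w hz S hcard hbig
end

section
/- Let Φ be an m×d real matrix with restricted isometry constant δ_r. Let T ⊆ {1,…,d} be an index set and let x ∈ ℝ^d be a vector. Provided that r ≥ |T ∪ supp(x)|, we have ‖Φ_T* (Φ · x|_{T^c})‖₂ ≤ δ_r ‖x|_{T^c}‖₂. -/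
/-- `δ` is a restricted isometry constant of `Φ` at sparsity level `r`
(quadratic form). The restricted isometry constant `δ_r` is the smallest such `δ ≥ 0`. -/
def RICq {m d : ℕ} (Φ : Matrix (Fin m) (Fin d) ℝ) (r : ℕ) (δ : ℝ) : Prop :=
  ∀ v : Fin d → ℝ, Sparse r v →
    (1 - δ) * (l2 v) ^ 2 ≤ (l2 (Φ.mulVec v)) ^ 2 ∧
      (l2 (Φ.mulVec v)) ^ 2 ≤ (1 + δ) * (l2 v) ^ 2

/-- The column submatrix of `Φ` with columns indexed by `T`. -/
def colSub {m d : ℕ} (Φ : Matrix (Fin m) (Fin d) ℝ) (T : Finset (Fin d)) :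
    Matrix (Fin m) {j // j ∈ T} ℝ :=
  Matrix.of fun i j => Φ i j.1

open Matrix

lemma l2_sq_eq_dotProduct {ι : Type*} [Fintype ι] (v : ι → ℝ) : l2 v ^ 2 = v ⬝ᵥ v := by
  rw [l2, Real.sq_sqrt (by positivity)]
  simp only [dotProduct, sq]

lemma l2_nonneg {ι : Type*} [Fintype ι] (v : ι → ℝ) : 0 ≤ l2 v :=
  Real.sqrt_nonneg _

@[simp]
lemma l2_zero {ι : Type*} [Fintype ι] : l2 (0 : ι → ℝ) = 0 := by
  simp [l2]

lemma l2_pos {ι : Type*} [Fintype ι] {v : ι → ℝ} (hv : v ≠ 0) : 0 < l2 v := by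
  refine (l2_nonneg v).lt_of_ne fun h => hv ?_
  rw [← dotProduct_self_eq_zero, ← l2_sq_eq_dotProduct, ← h, sq, zero_mul]

lemma l2_subtype {ι : Type*} [Fintype ι] [DecidableEq ι] (T : Finset ι) (f : ι → ℝ) :
    l2 (fun j : {j // j ∈ T} => f j) = l2 (fun i => if i ∈ T then f i else 0) := by
  simp only [l2, ite_pow, zero_pow two_ne_zero, Finset.sum_ite_mem, Finset.univ_inter]
  rw [Finset.sum_coe_sort T (fun i => f i ^ 2)]

lemma colSub_transpose_mulVec {m d : ℕ} (Φ : Matrix (Fin m) (Fin d) ℝ) (T : Finset (Fin d))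
    (g : Fin m → ℝ) : (colSub Φ T)ᵀ *ᵥ g = fun j : {j // j ∈ T} => (Φᵀ *ᵥ g) j :=
  rfl

lemma sparse_of_support_subset {d r : ℕ} {v : Fin d → ℝ} {S : Set (Fin d)}
    (hvS : Function.support v ⊆ S) (hS : S.ncard ≤ r) : Sparse r v :=
  (Set.ncard_le_ncard hvS (Set.toFinite S)).trans hS

namespace RICq

variable {m d r : ℕ} {Φ : Matrix (Fin m) (Fin d) ℝ} {δ : ℝ}

lemma le_dotProduct (hΦ : RICq Φ r δ) {v : Fin d → ℝ} (hv : Sparse r v) :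
    (1 - δ) * (v ⬝ᵥ v) ≤ Φ *ᵥ v ⬝ᵥ Φ *ᵥ v := by
  simpa only [l2_sq_eq_dotProduct] using (hΦ v hv).1

lemma dotProduct_le (hΦ : RICq Φ r δ) {v : Fin d → ℝ} (hv : Sparse r v) :
    Φ *ᵥ v ⬝ᵥ Φ *ᵥ v ≤ (1 + δ) * (v ⬝ᵥ v) := by
  simpa only [l2_sq_eq_dotProduct] using (hΦ v hv).2

lemma mul_l2_nonneg (hΦ : RICq Φ r δ) {v : Fin d → ℝ} (hv : Sparse r v) : 0 ≤ δ * l2 v := by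
  have h := (hΦ.le_dotProduct hv).trans (hΦ.dotProduct_le hv)
  rw [← l2_sq_eq_dotProduct] at h
  rcases (l2_nonneg v).eq_or_lt with h0 | hpos
  · rw [← h0, mul_zero]
  · exact nonneg_of_mul_nonneg_left (by nlinarith) hpos

lemma two_mul_dotProduct_mulVec_le (hΦ : RICq Φ r δ) {u v : Fin d → ℝ} (huv : u ⬝ᵥ v = 0)
    (hsupp : (Function.support u ∪ Function.support v).ncard ≤ r) :
    2 * (Φ *ᵥ u ⬝ᵥ Φ *ᵥ v) ≤ δ * (u ⬝ᵥ u + v ⬝ᵥ v) := by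
  have hadd := hΦ.dotProduct_le (v := u + v) (sparse_of_support_subset (Function.support_add u v) hsupp)
  have hsub := hΦ.le_dotProduct (v := u - v) (sparse_of_support_subset (Function.support_sub u v) hsupp)
  simp only [mulVec_add, mulVec_sub, add_dotProduct, dotProduct_add, sub_dotProduct,
    dotProduct_sub, dotProduct_comm v u, dotProduct_comm (Φ *ᵥ v) (Φ *ᵥ u), huv] at hadd hsub
  linarith

lemma dotProduct_mulVec_le (hΦ : RICq Φ r δ) {u v : Fin d → ℝ} (huv : u ⬝ᵥ v = 0)
    (hsupp : (Function.support u ∪ Function.support v).ncard ≤ r) :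
    Φ *ᵥ u ⬝ᵥ Φ *ᵥ v ≤ δ * l2 u * l2 v := by
  rcases eq_or_ne u 0 with rfl | hu
  · simp
  rcases eq_or_ne v 0 with rfl | hv
  · simp
  set a := l2 u
  set b := l2 v
  have ha : 0 < a := l2_pos hu
  have hb : 0 < b := l2_pos hv
  -- `b • u` and `a • v` have the same length `a * b`
  have h := hΦ.two_mul_dotProduct_mulVec_le (u := b • u) (v := a • v)
    (by simp [huv]) (by rwa [Function.support_const_smul_of_ne_zero _ _ hb.ne',
      Function.support_const_smul_of_ne_zero _ _ ha.ne'])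
  simp only [mulVec_smul, smul_dotProduct, dotProduct_smul, smul_eq_mul,
    ← l2_sq_eq_dotProduct] at h
  have hab : 0 < a * b := mul_pos ha hb
  nlinarith

end RICq

theorem stmt7_general (m d r : ℕ) (Φ : Matrix (Fin m) (Fin d) ℝ)
    (δ : ℝ) (hΦ : RICq Φ r δ)
    (T : Finset (Fin d)) (x : Fin d → ℝ)
    (hr : (↑T ∪ {i | x i ≠ 0}).ncard ≤ r) :
    l2 ((colSub Φ T).transpose.mulVec
        (Φ.mulVec fun i => if i ∈ T then 0 else x i)) ≤
      δ * l2 (fun i => if i ∈ T then 0 else x i) := by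
  classical
  set v : Fin d → ℝ := fun i => if i ∈ T then 0 else x i
  set z := Φᵀ *ᵥ (Φ *ᵥ v)
  set u : Fin d → ℝ := fun i => if i ∈ T then z i else 0
  have hsupp : Function.support u ∪ Function.support v ⊆ ↑T ∪ {i | x i ≠ 0} := by
    rintro i (hi | hi) <;> by_cases hiT : i ∈ T <;> simp_all [u, v]
  have huv : u ⬝ᵥ v = 0 :=
    Finset.sum_eq_zero fun i _ => by by_cases hiT : i ∈ T <;> simp [u, v, hiT]
  have huz : u ⬝ᵥ z = u ⬝ᵥ u :=
    Finset.sum_congr rfl fun i _ => by by_cases hiT : i ∈ T <;> simp [u, hiT]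
  have hkey : l2 u ^ 2 ≤ δ * l2 v * l2 u := calc
    l2 u ^ 2 = Φ *ᵥ u ⬝ᵥ Φ *ᵥ v := by
      rw [l2_sq_eq_dotProduct, ← huz, dotProduct_mulVec, vecMul_transpose]
    _ ≤ δ * l2 u * l2 v :=
      hΦ.dotProduct_mulVec_le huv ((Set.ncard_le_ncard hsupp (Set.toFinite _)).trans hr)
    _ = δ * l2 v * l2 u := by ring
  have hv : 0 ≤ δ * l2 v := hΦ.mul_l2_nonneg (sparse_of_support_subset
    (Set.subset_union_right.trans hsupp) hr)
  rw [colSub_transpose_mulVec, l2_subtype]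
  nlinarith [l2_nonneg u]

/-- If `δ ≥ 0` satisfies the restricted isometry inequalities at level
`r` (in particular for `δ = δ_r`) and `r ≥ |T ∪ supp(x)|`, then
`‖Φ_T* (Φ · x|_{T^c})‖₂ ≤ δ ‖x|_{T^c}‖₂`. -/
theorem stmt7 (m d r : ℕ) (Φ : Matrix (Fin m) (Fin d) ℝ)
    (δ : ℝ) (hδ0 : 0 ≤ δ) (hΦ : RICq Φ r δ)
    (T : Finset (Fin d)) (x : Fin d → ℝ)
    (hr : (↑T ∪ {i | x i ≠ 0}).ncard ≤ r) :
    l2 ((colSub Φ T).transpose.mulVec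
        (Φ.mulVec fun i => if i ∈ T then 0 else x i)) ≤
      δ * l2 (fun i => if i ∈ T then 0 else x i) :=
  stmt7_general m d r Φ δ hΦ T x hr
end
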